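/- arXiv:1904.10843 — 3 statements merged into one kernel-verified Lean document; each statement's English description precedes it below -/
import Mathlib

section
/- After κ iterations of the max-consensus protocol, each node holds the maximum of the initial values over all vertices reachable from it by a walk of length at most κ: for every κ and every vertex i, w κ i equals the maximum of w₀ j over all j ∈ V such that there exists a walk in G from i to j of length at most κ. -/
/-!
A walk of length at most `n + 1` from `i` is either trivial or a step to a neighbour followed by
a walk of length at most `n`. So the sets of vertices within walk-length `n` of `i` obey the same
recursion over the closed neighbourhood of `i` as the protocol, and a maximum over a union of such
sets is the maximum of the maxima over each of them.
-/

namespace SimpleGraph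

variable {V : Type*} (G : SimpleGraph V)

theorem exists_walk_length_le_succ_iff {i k : V} {n : ℕ} :
    (∃ p : G.Walk i k, p.length ≤ n + 1) ↔
      ∃ j, (j = i ∨ G.Adj i j) ∧ ∃ q : G.Walk j k, q.length ≤ n := by
  constructor
  · rintro ⟨p, hp⟩
    cases p with
    | nil => exact ⟨i, .inl rfl, .nil, by simp⟩
    | cons hadj q => exact ⟨_, .inr hadj, q, by simpa using hp⟩
  · rintro ⟨j, rfl | hadj, q, hq⟩
    · exact ⟨q, by omega⟩
    · exact ⟨.cons hadj q, by simpa using hq⟩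

open Classical in
noncomputable def walkBall [Fintype V] (i : V) (n : ℕ) : Finset V :=
  Finset.univ.filter fun j => ∃ p : G.Walk i j, p.length ≤ n

variable [Fintype V]

theorem mem_walkBall {i j : V} {n : ℕ} :
    j ∈ G.walkBall i n ↔ ∃ p : G.Walk i j, p.length ≤ n := by
  simp [walkBall]

theorem walkBall_nonempty (i : V) (n : ℕ) : (G.walkBall i n).Nonempty :=
  ⟨i, G.mem_walkBall.mpr ⟨.nil, Nat.zero_le n⟩⟩

theorem walkBall_zero (i : V) : G.walkBall i 0 = {i} := by
  ext j
  simp only [mem_walkBall, Nat.le_zero, Finset.mem_singleton]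
  constructor
  · rintro ⟨p, hp⟩
    exact (Walk.eq_of_length_eq_zero hp).symm
  · rintro rfl
    exact ⟨.nil, rfl⟩

theorem walkBall_succ [DecidableEq V] [DecidableRel G.Adj] (i : V) (n : ℕ) :
    G.walkBall i (n + 1) = (insert i (G.neighborFinset i)).biUnion (G.walkBall · n) := by
  ext k
  simp only [mem_walkBall, exists_walk_length_le_succ_iff, Finset.mem_biUnion,
    Finset.mem_insert, mem_neighborFinset]

end SimpleGraph

open Classical in
theorem max_consensus_eq_max_over_walks
    {V : Type*} [Fintype V] [DecidableEq V]
    (G : SimpleGraph V) [DecidableRel G.Adj]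
    (w₀ : V → ℝ) (w : ℕ → V → ℝ)
    (h0 : w 0 = w₀)
    (hstep : ∀ (κ : ℕ) (i : V), w (κ + 1) i =
      (insert i (G.neighborFinset i)).sup' (Finset.insert_nonempty i _) (w κ)) :
    ∀ (κ : ℕ) (i : V), w κ i =
      (Finset.univ.filter (fun j => ∃ p : G.Walk i j, p.length ≤ κ)).sup'
        ⟨i, Finset.mem_filter.mpr ⟨Finset.mem_univ i, ⟨SimpleGraph.Walk.nil, by simp⟩⟩⟩
        w₀ := by
  suffices h : ∀ κ i, w κ i = (G.walkBall i κ).sup' (G.walkBall_nonempty i κ) w₀ from h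
  intro κ
  induction κ with
  | zero => simp [h0, G.walkBall_zero]
  | succ κ ih =>
    intro i
    simp only [hstep, ih, G.walkBall_succ, Finset.sup'_biUnion _ (Finset.insert_nonempty _ _)
      (G.walkBall_nonempty · κ)]
end

section
/- (Quantitative convergence bound underlying Proposition 1) If the communication graph G is connected and κ is any natural number such that the graph distance G.dist i j ≤ κ for all pairs of vertices i, j (i.e., κ is at least the diameter of G), then after κ iterations every node holds the global maximum: for all vertices i, w κ i = max over j ∈ V of w₀ j. -/
/-!
Max-consensus never overshoots the global maximum, and a node's value never decreases.
Along a walk of length `n` from `i` to `j`, the value `w₀ j` travels one edge per round,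
so it reaches `i` after `n` rounds; taking a shortest walk, `G.dist i j ≤ κ` rounds suffice.
-/

namespace SimpleGraph

variable {V α : Type*} [Fintype V] [DecidableEq V] (G : SimpleGraph V) [DecidableRel G.Adj]
  [SemilatticeSup α]

def maxConsensusStep (x : V → α) (i : V) : α :=
  (insert i (G.neighborFinset i)).sup' (Finset.insert_nonempty i _) x

variable {G}

theorem le_maxConsensusStep_self (x : V → α) (i : V) : x i ≤ G.maxConsensusStep x i :=
  Finset.le_sup' x (Finset.mem_insert_self i _)

theorem le_maxConsensusStep_of_adj (x : V → α) {i j : V} (h : G.Adj i j) :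
    x j ≤ G.maxConsensusStep x i :=
  Finset.le_sup' x (Finset.mem_insert_of_mem ((G.mem_neighborFinset i j).2 h))

theorem maxConsensusStep_le {x : V → α} {c : α} (h : ∀ j, x j ≤ c) (i : V) :
    G.maxConsensusStep x i ≤ c :=
  Finset.sup'_le _ _ fun j _ => h j

theorem iterate_maxConsensusStep_le {x : V → α} {c : α} (h : ∀ j, x j ≤ c) (n : ℕ) (i : V) :
    G.maxConsensusStep^[n] x i ≤ c := by
  induction n generalizing i with
  | zero => exact h i
  | succ n ih =>
    rw [Function.iterate_succ_apply']
    exact maxConsensusStep_le ih i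

theorem monotone_iterate_maxConsensusStep (x : V → α) (i : V) :
    Monotone fun n => G.maxConsensusStep^[n] x i :=
  monotone_nat_of_le_succ fun n => by
    simp only [Function.iterate_succ_apply']
    exact le_maxConsensusStep_self _ i

theorem le_iterate_maxConsensusStep_of_walk (x : V → α) {i j : V} (p : G.Walk i j) :
    x j ≤ G.maxConsensusStep^[p.length] x i := by
  induction p with
  | nil => exact le_rfl
  | @cons a b c hab p ih =>
    calc x c ≤ G.maxConsensusStep^[p.length] x b := ih
      _ ≤ G.maxConsensusStep (G.maxConsensusStep^[p.length] x) a :=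
        le_maxConsensusStep_of_adj _ hab
      _ = G.maxConsensusStep^[(Walk.cons hab p).length] x a :=
        by rw [Walk.length_cons, Function.iterate_succ_apply']

theorem le_iterate_maxConsensusStep_of_dist_le (hconn : G.Connected) (x : V → α) {i j : V}
    {n : ℕ} (h : G.dist i j ≤ n) : x j ≤ G.maxConsensusStep^[n] x i := by
  obtain ⟨p, hp⟩ := hconn.exists_walk_length_eq_dist i j
  calc x j ≤ G.maxConsensusStep^[p.length] x i := le_iterate_maxConsensusStep_of_walk x p
    _ ≤ G.maxConsensusStep^[n] x i := monotone_iterate_maxConsensusStep x i (hp ▸ h)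

theorem iterate_maxConsensusStep_eq_sup' [Nonempty V] (hconn : G.Connected) (x : V → α)
    {i : V} {n : ℕ} (h : ∀ j, G.dist i j ≤ n) :
    G.maxConsensusStep^[n] x i = Finset.univ.sup' Finset.univ_nonempty x :=
  le_antisymm (iterate_maxConsensusStep_le (fun j => Finset.le_sup' x (Finset.mem_univ j)) n i)
    (Finset.sup'_le _ _ fun j _ => le_iterate_maxConsensusStep_of_dist_le hconn x (h j))

end SimpleGraph

theorem max_consensus_converges_within_diameter
    {V : Type*} [Fintype V] [Nonempty V] [DecidableEq V]
    (G : SimpleGraph V) [DecidableRel G.Adj]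
    (hconn : G.Connected)
    (w₀ : V → ℝ) (w : ℕ → V → ℝ)
    (h0 : w 0 = w₀)
    (hstep : ∀ (κ : ℕ) (i : V), w (κ + 1) i =
      (insert i (G.neighborFinset i)).sup' (Finset.insert_nonempty i _) (w κ))
    (κ : ℕ) (hdiam : ∀ i j : V, G.dist i j ≤ κ) :
    ∀ i : V, w κ i = Finset.univ.sup' Finset.univ_nonempty w₀ := by
  have hw : ∀ n, w n = G.maxConsensusStep^[n] w₀ := by
    intro n
    induction n with
    | zero => exact h0
    | succ n ih =>
      rw [Function.iterate_succ_apply', ← ih]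
      exact funext (hstep n)
  intro i
  rw [hw]
  exact SimpleGraph.iterate_maxConsensusStep_eq_sup' hconn w₀ (hdiam i)
end

section
/- (Distributed enabling rule is well defined) If the communication graph G is connected and the initial values are pairwise distinct, then after consensus each node can locally decide the unique enabled module: there exists κ̄ such that for all κ ≥ κ̄ there is a unique vertex i with w₀ i = w κ i; moreover this unique i is the vertex attaining the maximum of w₀ over V. -/
/-!
Each round of max-consensus lets a value travel along one edge and never lowers a value, so
`w κ i` dominates `w₀ j` as soon as `κ` reaches the distance from `i` to `j`. After `diam G`
rounds every node therefore holds `max w₀`, which it can only recognise as its own initial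
value if it is the (unique, by distinctness) maximiser.
-/

namespace SimpleGraph

variable {V α : Type*} [DecidableEq V] [SemilatticeSup α] (G : SimpleGraph V) [G.LocallyFinite]

def IsMaxConsensus (w : ℕ → V → α) : Prop :=
  ∀ (κ : ℕ) (i : V), w (κ + 1) i =
    (insert i (G.neighborFinset i)).sup' (Finset.insert_nonempty i _) (w κ)

namespace IsMaxConsensus

variable {G} {w : ℕ → V → α}

theorem le_succ (hw : G.IsMaxConsensus w) (κ : ℕ) (i : V) : w κ i ≤ w (κ + 1) i := by
  rw [hw]
  exact Finset.le_sup' _ (Finset.mem_insert_self i _)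

theorem monotone (hw : G.IsMaxConsensus w) (i : V) : Monotone (w · i) :=
  monotone_nat_of_le_succ fun κ => hw.le_succ κ i

theorem le_of_walk (hw : G.IsMaxConsensus w) {a b : V} (p : G.Walk a b) :
    w 0 b ≤ w p.length a := by
  induction p with
  | nil => exact le_rfl
  | cons hadj q ih =>
    rw [Walk.length_cons, hw]
    exact ih.trans <| Finset.le_sup' _ <|
      Finset.mem_insert_of_mem ((G.mem_neighborFinset _ _).mpr hadj)

theorem le_of_dist_le (hw : G.IsMaxConsensus w) {a b : V} (hab : G.Reachable a b) {κ : ℕ}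
    (hκ : G.dist a b ≤ κ) : w 0 b ≤ w κ a := by
  obtain ⟨p, hp⟩ := hab.exists_walk_length_eq_dist
  exact (hw.le_of_walk p).trans (hw.monotone a (hp ▸ hκ))

variable [Fintype V] [Nonempty V]

theorem le_sup'_univ (hw : G.IsMaxConsensus w) (κ : ℕ) (i : V) :
    w κ i ≤ Finset.univ.sup' Finset.univ_nonempty (w 0) := by
  induction κ generalizing i with
  | zero => exact Finset.le_sup' _ (Finset.mem_univ i)
  | succ κ ih =>
    rw [hw]
    exact Finset.sup'_le _ _ fun k _ => ih k

theorem eq_sup'_univ_of_diam_le (hw : G.IsMaxConsensus w) (hconn : G.Connected) {κ : ℕ}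
    (hκ : G.diam ≤ κ) (i : V) : w κ i = Finset.univ.sup' Finset.univ_nonempty (w 0) := by
  have hediam : G.ediam ≠ ⊤ := G.connected_iff_ediam_ne_top.mp hconn
  refine le_antisymm (hw.le_sup'_univ κ i) (Finset.sup'_le _ _ fun j _ => ?_)
  exact hw.le_of_dist_le (hconn.preconnected i j) ((G.dist_le_diam hediam).trans hκ)

end IsMaxConsensus

end SimpleGraph

theorem distributed_enabling_well_defined
    {V : Type*} [Fintype V] [Nonempty V] [DecidableEq V]
    (G : SimpleGraph V) [DecidableRel G.Adj]
    (hconn : G.Connected)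
    (w₀ : V → ℝ)
    (hdist : ∀ i j : V, i ≠ j → w₀ i ≠ w₀ j)
    (w : ℕ → V → ℝ)
    (h0 : w 0 = w₀)
    (hstep : ∀ (κ : ℕ) (i : V), w (κ + 1) i =
      (insert i (G.neighborFinset i)).sup' (Finset.insert_nonempty i _) (w κ)) :
    ∃ κbar : ℕ, ∀ κ ≥ κbar,
      (∃! i : V, w₀ i = w κ i) ∧
      (∀ i : V, w₀ i = w κ i →
        w₀ i = Finset.univ.sup' Finset.univ_nonempty w₀) := by
  have hw : G.IsMaxConsensus w := hstep
  subst h0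
  obtain ⟨j, -, hj⟩ := Finset.exists_mem_eq_sup' Finset.univ_nonempty (w 0)
  refine ⟨G.diam, fun κ hκ => ?_⟩
  have hmax : ∀ i, w κ i = w 0 j := fun i => (hw.eq_sup'_univ_of_diam_le hconn hκ i).trans hj
  refine ⟨⟨j, (hmax j).symm, fun i hi => ?_⟩, fun i hi => by rw [hi, hmax, hj]⟩
  by_contra hne
  exact hdist i j hne (hi.trans (hmax i))
end
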